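/- If an NFA M uniquely accepts a square-free word w of length n (i.e., the only accepting path of length n spells w), then M has at least ⌊n/2⌋ + 1 states. -/

import Mathlib

/-- `IsAccPath M n v s` says that `s` is an accepting path of length `n` in the
NFA `M` (no ε-transitions) spelling the word `v`: it starts in a start state,
ends in an accepting state, and each step follows a transition labeled by the
corresponding letter of `v`. -/
def IsAccPath {α σ : Type*} (M : NFA α σ) (n : ℕ) (v : List α)
    (s : Fin (n + 1) → σ) : Prop :=
  ∃ h : v.length = n,
    s 0 ∈ M.start ∧ s (Fin.last n) ∈ M.accept ∧
    ∀ i : Fin n, s i.succ ∈ M.step (s i.castSucc) (v.get (Fin.cast h.symm i))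

/-- `UniquelyAccepts M w` says that `M` accepts `w` and there is exactly one
accepting path of length `|w|` over all words of length `|w|`; it spells `w`. -/
def UniquelyAccepts {α σ : Type*} (M : NFA α σ) (w : List α) : Prop :=
  (∃ s, IsAccPath M w.length w s) ∧
  (∀ (v : List α) (s : Fin (w.length + 1) → σ), IsAccPath M w.length v s → v = w) ∧
  (∀ s s' : Fin (w.length + 1) → σ,
    IsAccPath M w.length w s → IsAccPath M w.length w s' → s = s')

/-!
Three visits of one state at positions `i < j < k` of the accepting path cut `w = a x y b`
with loops `x` and `y`; swapping the loops gives an accepting path spelling `a y x b`, so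
uniqueness forces `x y = y x`. Of two commuting nonempty words the shorter one is a prefix of
the other, so `x y` begins with a square, contradicting square-freeness. By pigeonhole such a
triple exists among the `n + 1` states of the path as soon as `n + 1 > 2 |σ|`.
-/

theorem List.exists_square_prefix_of_append_comm {α : Type*} {x y : List α} (hx : x ≠ [])
    (hy : y ≠ []) (hxy : x ++ y = y ++ x) : ∃ u ≠ [], u ++ u <+: x ++ y := by
  rcases le_total x.length y.length with hle | hle
  · obtain ⟨y', rfl⟩ : x <+: y :=
      prefix_of_prefix_length_le (prefix_append x y) (hxy ▸ prefix_append y x) hle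
    exact ⟨x, hx, by simp⟩
  · obtain ⟨x', rfl⟩ : y <+: x :=
      prefix_of_prefix_length_le (hxy ▸ prefix_append y x) (prefix_append x y) hle
    exact ⟨y, hy, by simp [hxy]⟩

theorem List.drop_take_append_drop_take {α : Type*} (l : List α) {i j k : ℕ} (hij : i ≤ j)
    (hjk : j ≤ k) : (l.take j).drop i ++ (l.take k).drop j = (l.take k).drop i := by
  apply List.ext_getElem
  · simp only [length_append, length_drop, length_take]
    omega
  · intro t h _
    simp only [getElem_append, getElem_drop, getElem_take, length_drop, length_take,
      length_append] at h ⊢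
    split_ifs <;> grind

theorem Fintype.exists_lt_lt_eq_eq_of_two_mul_card_lt {ι β : Type*} [LinearOrder ι] [Fintype ι]
    [Fintype β] (f : ι → β) (h : 2 * Fintype.card β < Fintype.card ι) :
    ∃ i j k, i < j ∧ j < k ∧ f i = f j ∧ f j = f k := by
  classical
  obtain ⟨b, hb⟩ := Fintype.exists_lt_card_fiber_of_mul_lt_card f (by rwa [mul_comm] at h)
  obtain ⟨t, hts, ht⟩ := Finset.exists_subset_card_eq hb
  set e := t.orderEmbOfFin ht
  have hfe (m : Fin 3) : f (e m) = b := (Finset.mem_filter.mp (hts (t.orderEmbOfFin_mem ht m))).2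
  exact ⟨e 0, e 1, e 2, by simp, by simp, by rw [hfe, hfe], by rw [hfe, hfe]⟩

namespace NFA

variable {α σ : Type*}

def IsRun (M : NFA α σ) (v : List α) (s : Fin (v.length + 1) → σ) : Prop :=
  ∀ i : Fin v.length, s i.succ ∈ M.step (s i.castSucc) (v.get i)

variable {M : NFA α σ}

theorem mem_evalFrom_append_of_mem {S : Set σ} {x y : List α} {p q : σ}
    (hp : p ∈ M.evalFrom S x) (hq : q ∈ M.evalFrom {p} y) : q ∈ M.evalFrom S (x ++ y) := by
  rw [evalFrom_append, mem_evalFrom_iff_exists]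
  exact ⟨p, hp, hq⟩

theorem IsRun.mem_evalFrom {v : List α} {s : Fin (v.length + 1) → σ} (hs : M.IsRun v s)
    {t t' : Fin (v.length + 1)} (htt' : t ≤ t') :
    s t' ∈ M.evalFrom {s t} ((v.take t').drop t) := by
  induction t' using Fin.induction with
  | zero =>
    obtain rfl : t = 0 := Fin.le_zero_iff.mp htt'
    simp
  | succ t' ih =>
    rcases htt'.eq_or_lt with rfl | hlt
    · simp
    · have hle : t ≤ t'.castSucc := Fin.le_castSucc_iff.mpr hlt
      have hsplit : (v.take (t' + 1)).drop t = (v.take t').drop t ++ [v.get t'] := by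
        rw [List.take_add_one,
          List.drop_append_of_le_length (by simpa using Fin.le_def.mp hle)]
        simp
      rw [Fin.val_succ, hsplit]
      exact mem_evalFrom_append_of_mem (ih hle) (by simpa using hs t')

theorem exists_isRun_of_mem_evalFrom {S : Set σ} {q : σ} {v : List α}
    (hq : q ∈ M.evalFrom S v) :
    ∃ s : Fin (v.length + 1) → σ, s 0 ∈ S ∧ s (Fin.last _) = q ∧ M.IsRun v s := by
  induction v generalizing S with
  | nil => exact ⟨fun _ => q, hq, rfl, fun i => i.elim0⟩
  | cons a v ih =>
    obtain ⟨s, hs0, hslast, hs⟩ := ih hq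
    obtain ⟨p, hp, hps⟩ := mem_stepSet.mp hs0
    refine ⟨Fin.cons p s, hp, hslast, fun i => ?_⟩
    cases i using Fin.cases with
    | zero => exact hps
    | succ i => exact hs i

theorem IsRun.swap_loops_mem_accepts {v : List α} {s : Fin (v.length + 1) → σ}
    (hs : M.IsRun v s) (h0 : s 0 ∈ M.start) (hlast : s (Fin.last _) ∈ M.accept)
    {i j k : Fin (v.length + 1)} (hij : i ≤ j) (hjk : j ≤ k) (hsij : s i = s j)
    (hsjk : s j = s k) :
    v.take i ++ (v.take k).drop j ++ (v.take j).drop i ++ v.drop k ∈ M.accepts := by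
  have hsik : s k = s i := (hsij.trans hsjk).symm
  have hpre : s i ∈ M.evalFrom M.start (v.take i) :=
    mem_evalFrom_iff_exists.mpr ⟨s 0, h0, by simpa using hs.mem_evalFrom (Fin.zero_le i)⟩
  have hy : s k ∈ M.evalFrom {s i} ((v.take k).drop j) := by
    rw [hsij]; exact hs.mem_evalFrom hjk
  have hx : s j ∈ M.evalFrom {s k} ((v.take j).drop i) := by
    rw [hsik]; exact hs.mem_evalFrom hij
  have hsuf : s (Fin.last _) ∈ M.evalFrom {s j} (v.drop k) := by
    rw [hsjk]; simpa using hs.mem_evalFrom (Fin.le_last k)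
  exact mem_accepts.mpr ⟨_, hlast, mem_evalFrom_append_of_mem
    (mem_evalFrom_append_of_mem (mem_evalFrom_append_of_mem hpre hy) hx) hsuf⟩

end NFA

theorem isAccPath_length_iff {α σ : Type*} {M : NFA α σ} {v : List α}
    {s : Fin (v.length + 1) → σ} :
    IsAccPath M v.length v s ↔ s 0 ∈ M.start ∧ s (Fin.last _) ∈ M.accept ∧ M.IsRun v s :=
  ⟨fun ⟨_, h0, hlast, hs⟩ => ⟨h0, hlast, hs⟩,
    fun ⟨h0, hlast, hs⟩ => ⟨rfl, h0, hlast, hs⟩⟩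

theorem exists_isAccPath_of_mem_accepts {α σ : Type*} {M : NFA α σ} {v : List α} {n : ℕ}
    (hv : v ∈ M.accepts) (hn : v.length = n) : ∃ s, IsAccPath M n v s := by
  subst hn
  obtain ⟨q, hq, hqv⟩ := NFA.mem_accepts.mp hv
  obtain ⟨s, hs0, rfl, hs⟩ := NFA.exists_isRun_of_mem_evalFrom hqv
  exact ⟨s, isAccPath_length_iff.mpr ⟨hs0, hq, hs⟩⟩

theorem stmt_18 {α σ : Type*} [Fintype σ] (M : NFA α σ) (w : List α)
    (hsf : ∀ u : List α, u ≠ [] → ¬ (u ++ u) <:+: w)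
    (hacc : UniquelyAccepts M w) :
    w.length / 2 + 1 ≤ Fintype.card σ := by
  obtain ⟨⟨s, hs⟩, hunique, -⟩ := hacc
  obtain ⟨hs0, hlast, hrun⟩ := isAccPath_length_iff.mp hs
  by_contra! hcard
  obtain ⟨i, j, k, hij, hjk, hsij, hsjk⟩ :=
    Fintype.exists_lt_lt_eq_eq_of_two_mul_card_lt s (by simp only [Fintype.card_fin]; omega)
  set x := (w.take j).drop i
  set y := (w.take k).drop j
  have hw : w.take i ++ (x ++ y) ++ w.drop k = w := by
    rw [List.drop_take_append_drop_take w hij.le hjk.le]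
    simpa using congrArg (· ++ w.drop k)
      (List.drop_take_append_drop_take w (Nat.zero_le i) (hij.trans hjk).le)
  have hswap : w.take i ++ y ++ x ++ w.drop k ∈ M.accepts :=
    hrun.swap_loops_mem_accepts hs0 hlast hij.le hjk.le hsij hsjk
  have hlen : (w.take i ++ y ++ x ++ w.drop k).length = w.length := by
    have := congrArg List.length hw
    simp only [List.length_append] at this ⊢
    omega
  obtain ⟨s', hs'⟩ := exists_isAccPath_of_mem_accepts hswap hlen
  have hyx : y ++ x = x ++ y := by
    have := (hunique _ s' hs').trans hw.symm
    rwa [List.append_assoc (w.take i) y x, List.append_cancel_right_eq,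
      List.append_cancel_left_eq] at this
  have hx : x ≠ [] := List.ne_nil_of_length_pos (by simp [x]; omega)
  have hy : y ≠ [] := List.ne_nil_of_length_pos (by simp [y]; omega)
  obtain ⟨u, hu, hsq⟩ := List.exists_square_prefix_of_append_comm hx hy hyx.symm
  exact hsf u hu (hsq.isInfix.trans ⟨_, _, hw⟩)
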